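/- With notation as above, ‖L_J(B)‖ ≤ 2|J| ‖B‖ / g, where g := min_{r∈J, s∉J} |μ_r − μ_s| and |J| is the number of distinct eigenvalues in J, and ‖·‖ is the spectral norm. -/

import Mathlib

open Finset

/-- The spectral (operator) norm of a real square matrix. -/
noncomputable def opNorm {p : ℕ} (A : Matrix (Fin p) (Fin p) ℝ) : ℝ :=
  ‖Matrix.toEuclideanCLM (𝕜 := ℝ) (n := Fin p) A‖

/-!
On Euclidean space the `P r` become orthogonal projections with mutually orthogonal ranges
summing to the identity, so by Pythagoras `‖∑ c s • P s‖ ≤ max |c s|`. Writing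
`C r = ∑_{s ∉ J} (μ r - μ s)⁻¹ • P s`, this gives `‖C r‖ ≤ 1 / g` and `‖P r‖ ≤ 1`, while
`L = ∑_{r ∈ J} (P r * B * C r + C r * B * P r)`; each of the `|J|` summands has norm at most
`2 ‖B‖ / g`.
-/

section OrthogonalProjections

variable {𝕜 E ι : Type*} [RCLike 𝕜] [NormedAddCommGroup E] [InnerProductSpace 𝕜 E]

theorem norm_sum_sq_of_pairwise_inner_eq_zero {v : ι → E}
    (hv : Pairwise fun i j => inner 𝕜 (v i) (v j) = 0) (S : Finset ι) :
    ‖∑ i ∈ S, v i‖ ^ 2 = ∑ i ∈ S, ‖v i‖ ^ 2 := by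
  classical
  induction S using Finset.induction_on with
  | empty => simp
  | insert a S ha ih =>
    have hperp : inner 𝕜 (v a) (∑ i ∈ S, v i) = 0 := by
      rw [inner_sum]
      exact sum_eq_zero fun i hi => hv (ne_of_mem_of_not_mem hi ha).symm
    rw [sum_insert ha, sum_insert ha, @norm_add_sq 𝕜, hperp, ih]
    simp

variable [CompleteSpace E] {Q : ι → E →L[𝕜] E}

theorem inner_apply_apply_eq_zero (hQ : ∀ r, IsSelfAdjoint (Q r))
    (horth : Pairwise fun r s => Q r * Q s = 0) (x : E) :
    Pairwise fun r s => inner 𝕜 (Q r x) (Q s x) = 0 := fun r s hrs => by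
  beta_reduce
  rw [← ContinuousLinearMap.adjoint_inner_right, ← ContinuousLinearMap.star_eq_adjoint,
    (hQ r).star_eq, ← mul_apply_eq_comp, horth hrs,
    zero_apply, inner_zero_right]

theorem norm_sum_smul_le_of_isStarProjection [Fintype ι] (hQ : ∀ r, IsStarProjection (Q r))
    (horth : Pairwise fun r s => Q r * Q s = 0) (hsum : ∑ r, Q r = 1)
    {S : Finset ι} {c : ι → 𝕜} {M : ℝ} (hM : 0 ≤ M) (hc : ∀ s ∈ S, ‖c s‖ ≤ M) :
    ‖∑ s ∈ S, c s • Q s‖ ≤ M := by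
  refine ContinuousLinearMap.opNorm_le_bound _ hM fun x => ?_
  have hperp := inner_apply_apply_eq_zero (fun r => (hQ r).isSelfAdjoint) horth x
  refine le_of_pow_le_pow_left₀ two_ne_zero (by positivity) ?_
  calc ‖(∑ s ∈ S, c s • Q s) x‖ ^ 2 = ∑ s ∈ S, ‖c s • Q s x‖ ^ 2 := by
        rw [_root_.sum_apply]
        refine norm_sum_sq_of_pairwise_inner_eq_zero (𝕜 := 𝕜) (fun r s hrs => ?_) S
        simp [inner_smul_left, inner_smul_right, hperp hrs]
    _ ≤ ∑ s ∈ S, M ^ 2 * ‖Q s x‖ ^ 2 := by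
        gcongr with s hs
        rw [norm_smul, mul_pow]
        gcongr
        exact hc s hs
    _ ≤ ∑ s, M ^ 2 * ‖Q s x‖ ^ 2 :=
        sum_le_sum_of_subset_of_nonneg (subset_univ S) fun _ _ _ => by positivity
    _ = (M * ‖x‖) ^ 2 := by
        rw [← mul_sum, ← norm_sum_sq_of_pairwise_inner_eq_zero hperp, ← _root_.sum_apply, hsum,
          one_apply_eq_self, mul_pow]

end OrthogonalProjections

theorem sum_smul_mul_mul_add_mul_mul {R A : Type*} [CommSemiring R] [Semiring A] [Algebra R A]
    {ι : Type*} (S : Finset ι) (w : ι → R) (a b : A) (q : ι → A) :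
    ∑ s ∈ S, w s • (a * b * q s + q s * b * a) =
      a * b * ∑ s ∈ S, w s • q s + (∑ s ∈ S, w s • q s) * b * a := by
  simp only [smul_add, sum_add_distrib, mul_sum, sum_mul, mul_smul_comm, smul_mul_assoc]

theorem norm_mul_mul_add_mul_mul_le {A : Type*} [NonUnitalSeminormedRing A] (a b c : A) :
    ‖a * b * c + c * b * a‖ ≤ 2 * (‖a‖ * ‖b‖ * ‖c‖) := by
  linarith [norm_add_le (a * b * c) (c * b * a), norm_mul₃_le (a := a) (b := b) (c := c),
    norm_mul₃_le (a := c) (b := b) (c := a)]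

theorem opNorm_L_le_general {p q : ℕ}
    (μ : Fin q → ℝ)
    (P : Fin q → Matrix (Fin p) (Fin p) ℝ)
    (hsymm : ∀ r, (P r).IsSymm)
    (hidem : ∀ r, P r * P r = P r)
    (horth : ∀ r s, r ≠ s → P r * P s = 0)
    (hsum : ∑ r, P r = 1)
    (B : Matrix (Fin p) (Fin p) ℝ)
    (J : Finset (Fin q))
    (L : Matrix (Fin p) (Fin p) ℝ)
    (hL : L = ∑ r ∈ J, ∑ s ∈ Jᶜ, (μ r - μ s)⁻¹ • (P r * B * P s + P s * B * P r))
    (g : ℝ) (hg : 0 < g) (hgap : ∀ r ∈ J, ∀ s ∈ Jᶜ, g ≤ |μ r - μ s|) :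
    opNorm L ≤ 2 * J.card * opNorm B / g := by
  set f := Matrix.toEuclideanCLM (𝕜 := ℝ) (n := Fin p)
  set Q := fun r => f (P r)
  set C := fun r => ∑ s ∈ Jᶜ, (μ r - μ s)⁻¹ • Q s
  have hQ (r : Fin q) : IsStarProjection (Q r) :=
    IsStarProjection.map ⟨hidem r, (Matrix.isHermitian_iff_isSymm.2 (hsymm r)).isSelfAdjoint⟩ f
  have hQorth : Pairwise fun r s => Q r * Q s = 0 := fun r s hrs => by
    simp only [Q, ← map_mul, horth r s hrs, map_zero]
  have hQsum : ∑ r, Q r = 1 := by simp only [Q, ← map_sum, hsum, map_one]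
  have hC (r : Fin q) (hr : r ∈ J) : ‖C r‖ ≤ g⁻¹ :=
    norm_sum_smul_le_of_isStarProjection hQ hQorth hQsum (inv_nonneg.2 hg.le) fun s hs => by
      rw [norm_inv, Real.norm_eq_abs]
      exact inv_anti₀ hg (hgap r hr s hs)
  have hfL : f L = ∑ r ∈ J, (Q r * f B * C r + C r * f B * Q r) := by
    simp only [hL, map_sum, map_smul, map_add, map_mul, sum_smul_mul_mul_add_mul_mul, Q, C]
  calc opNorm L = ‖∑ r ∈ J, (Q r * f B * C r + C r * f B * Q r)‖ := congrArg norm hfL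
    _ ≤ ∑ r ∈ J, 2 * (‖Q r‖ * ‖f B‖ * ‖C r‖) :=
      norm_sum_le_of_le _ fun r _ => norm_mul_mul_add_mul_mul_le _ _ _
    _ ≤ ∑ r ∈ J, 2 * (1 * ‖f B‖ * g⁻¹) := by
      gcongr with r hr
      · exact (hQ r).norm_le
      · exact hC r hr
    _ = 2 * J.card * opNorm B / g := by
      rw [sum_const, nsmul_eq_mul, opNorm]
      ring

/-- With `A = ∑_r μ_r P_r` the spectral decomposition of a symmetric matrix into distinct
eigenvalues with orthogonal projectors, `B` symmetric, and
`L_J(B) = ∑_{r ∈ J} ∑_{s ∉ J} (P_r B P_s + P_s B P_r)/(μ_r - μ_s)`, one has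
`‖L_J(B)‖ ≤ 2 |J| ‖B‖ / g` where `g > 0` is the spectral gap
`g := min_{r ∈ J, s ∉ J} |μ_r - μ_s|`. -/
theorem opNorm_L_le {p q : ℕ} (A : Matrix (Fin p) (Fin p) ℝ)
    (μ : Fin q → ℝ) (hμ : Function.Injective μ)
    (P : Fin q → Matrix (Fin p) (Fin p) ℝ)
    (hsymm : ∀ r, (P r).IsSymm)
    (hidem : ∀ r, P r * P r = P r)
    (horth : ∀ r s, r ≠ s → P r * P s = 0)
    (hsum : ∑ r, P r = 1)
    (hA : A = ∑ r, μ r • P r)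
    (B : Matrix (Fin p) (Fin p) ℝ) (hB : B.IsSymm)
    (J : Finset (Fin q))
    (L : Matrix (Fin p) (Fin p) ℝ)
    (hL : L = ∑ r ∈ J, ∑ s ∈ Jᶜ, (μ r - μ s)⁻¹ • (P r * B * P s + P s * B * P r))
    (g : ℝ) (hg : 0 < g) (hgap : ∀ r ∈ J, ∀ s ∈ Jᶜ, g ≤ |μ r - μ s|) :
    opNorm L ≤ 2 * J.card * opNorm B / g :=
  opNorm_L_le_general μ P hsymm hidem horth hsum B J L hL g hg hgap
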